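/- Hyperbolic intertwining, full: for integer m ≥ 1, the operator Q_m = Γ_1 Γ_2 ··· Γ_m (where Γ_k = ∂_r + (n+k−2)coth(r)) satisfies Q_m ∘ D_{m,r} = D_{0,r} ∘ Q_m on smooth functions of r > 0. -/

import Mathlib

/-- `Γ_k = ∂_r + (n+k−2) coth(r)`. -/
noncomputable def Gam (n k : ℕ) (g : ℝ → ℝ) : ℝ → ℝ :=
  fun r => deriv g r + ((n : ℝ) + k - 2) * (Real.cosh r / Real.sinh r) * g r

/-- `D_{m,r} = ∂_r² + (n−1)coth(r)∂_r − m(m+n−2)/sinh²(r)`. -/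
noncomputable def Dop (n m : ℕ) (g : ℝ → ℝ) : ℝ → ℝ :=
  fun r => deriv (deriv g) r + ((n : ℝ) - 1) * (Real.cosh r / Real.sinh r) * deriv g r
    - ((m : ℝ) * ((m : ℝ) + n - 2) / (Real.sinh r) ^ 2) * g r

/-- `Q_m = Γ_1 ∘ Γ_2 ∘ ⋯ ∘ Γ_m`, rightmost factor acting first:
`Q_{m+1} g = Q_m (Γ_{m+1} g)`. -/
noncomputable def QH (n : ℕ) : ℕ → (ℝ → ℝ) → ℝ → ℝ
  | 0, g => g
  | m + 1, g => QH n m (Gam n (m + 1) g)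

namespace HypAux

open Set Real

lemma sinh_ne {r : ℝ} (hr : r ∈ Set.Ioi (0:ℝ)) : Real.sinh r ≠ 0 :=
  ne_of_gt (Real.sinh_pos_iff.mpr hr)

/-- derivative of `coth`. -/
lemma hasDerivAt_coth {r : ℝ} (hs : Real.sinh r ≠ 0) :
    HasDerivAt (fun x => Real.cosh x / Real.sinh x) (-(1 / Real.sinh r ^ 2)) r := by
  have h := (Real.hasDerivAt_cosh r).div (Real.hasDerivAt_sinh r) hs
  refine h.congr_deriv ?_
  have h2 : Real.cosh r ^ 2 - Real.sinh r ^ 2 = 1 := Real.cosh_sq_sub_sinh_sq r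
  field_simp
  nlinarith [h2]

/-- derivative of `C / sinh ^ 2`. -/
lemma hasDerivAt_invsq (C : ℝ) {r : ℝ} (hs : Real.sinh r ≠ 0) :
    HasDerivAt (fun x => C / Real.sinh x ^ 2)
      (-(2 * C * Real.cosh r / Real.sinh r ^ 3)) r := by
  have h := (hasDerivAt_const r C).div ((Real.hasDerivAt_sinh r).pow 2)
    (pow_ne_zero 2 hs)
  refine h.congr_deriv ?_
  simp only [Pi.pow_apply]
  field_simp
  ring

lemma hd_of_contDiffOn {g : ℝ → ℝ} (hg : ContDiffOn ℝ (⊤ : ℕ∞) g (Set.Ioi 0)) {r : ℝ}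
    (hr : r ∈ Set.Ioi (0:ℝ)) : HasDerivAt g (deriv g r) r :=
  ((hg.contDiffAt (isOpen_Ioi.mem_nhds hr)).differentiableAt (by simp)).hasDerivAt

lemma deriv_smooth {g : ℝ → ℝ} (hg : ContDiffOn ℝ (⊤ : ℕ∞) g (Set.Ioi 0)) :
    ContDiffOn ℝ (⊤ : ℕ∞) (deriv g) (Set.Ioi 0) :=
  hg.deriv_of_isOpen isOpen_Ioi (by simp)

/-- smoothness of coth on `(0,∞)`. -/
lemma coth_smooth : ContDiffOn ℝ (⊤ : ℕ∞) (fun x => Real.cosh x / Real.sinh x) (Set.Ioi 0) :=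
  Real.contDiff_cosh.contDiffOn.div Real.contDiff_sinh.contDiffOn
    (fun _ hx => sinh_ne hx)

lemma Gam_smooth (n k : ℕ) {g : ℝ → ℝ} (hg : ContDiffOn ℝ (⊤ : ℕ∞) g (Set.Ioi 0)) :
    ContDiffOn ℝ (⊤ : ℕ∞) (Gam n k g) (Set.Ioi 0) := by
  unfold Gam
  exact (deriv_smooth hg).add
    (((contDiffOn_const.mul coth_smooth)).mul hg)

/-- first derivative of `Gam n k g` on `(0,∞)`. -/
lemma deriv_Gam (n k : ℕ) {g : ℝ → ℝ} (hg : ContDiffOn ℝ (⊤ : ℕ∞) g (Set.Ioi 0)) {r : ℝ}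
    (hr : r ∈ Set.Ioi (0:ℝ)) :
    deriv (Gam n k g) r = deriv (deriv g) r
      + ((n : ℝ) + k - 2) *
        ((-(1 / Real.sinh r ^ 2)) * g r + (Real.cosh r / Real.sinh r) * deriv g r) := by
  have hs := sinh_ne hr
  have h1 : HasDerivAt (Gam n k g)
      (deriv (deriv g) r + ((n : ℝ) + k - 2) *
        ((-(1 / Real.sinh r ^ 2)) * g r + (Real.cosh r / Real.sinh r) * deriv g r)) r := by
    have hdg := hd_of_contDiffOn hg hr
    have hddg := hd_of_contDiffOn (deriv_smooth hg) hr
    have hc := hasDerivAt_coth hs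
    have hprod := ((hc.const_mul ((n : ℝ) + k - 2)).mul hdg)
    have := hddg.add hprod
    refine this.congr_deriv ?_
    ring
  exact h1.deriv

/-- Key single-step intertwining:
`Γ_{k+1} ∘ D_{k+1} = D_k ∘ Γ_{k+1}` on `(0,∞)`. -/
lemma step (n k : ℕ) {g : ℝ → ℝ} (hg : ContDiffOn ℝ (⊤ : ℕ∞) g (Set.Ioi 0)) :
    Set.EqOn (Gam n (k+1) (Dop n (k+1) g)) (Dop n k (Gam n (k+1) g)) (Set.Ioi 0) := by
  intro r hr
  have hs := sinh_ne hr
  have hg1 := deriv_smooth hg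
  have hg2 := deriv_smooth hg1
  -- basic derivatives at r
  have hdg := hd_of_contDiffOn hg hr
  have hddg := hd_of_contDiffOn hg1 hr
  have hdddg := hd_of_contDiffOn hg2 hr
  have hc := hasDerivAt_coth hs
  set a : ℝ := (n : ℝ) + (k+1 : ℕ) - 2 with ha
  set M : ℝ := ((k+1 : ℕ) : ℝ) * (((k+1 : ℕ) : ℝ) + n - 2) with hM
  -- derivative of Dop n (k+1) g at r
  have hDop : HasDerivAt (Dop n (k+1) g)
      (deriv (deriv (deriv g)) r
        + ((n:ℝ)-1) * ((-(1 / Real.sinh r ^ 2)) * deriv g r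
            + (Real.cosh r / Real.sinh r) * deriv (deriv g) r)
        - ((-(2 * M * Real.cosh r / Real.sinh r ^ 3)) * g r
            + (M / Real.sinh r ^ 2) * deriv g r)) r := by
    have h1 := hdddg.add (((hc.const_mul ((n:ℝ)-1)).mul hddg))
    have h2 := ((hasDerivAt_invsq M hs).mul hdg)
    have := h1.sub h2
    refine this.congr_deriv ?_
    ring
  -- second derivative of Gam n (k+1) g at r : use that deriv (Gam ...) agrees with an
  -- explicit expression on the open set Ioi 0
  have heq : Set.EqOn (deriv (Gam n (k+1) g))
      (fun x => deriv (deriv g) x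
        + a * ((-(1 / Real.sinh x ^ 2)) * g x + (Real.cosh x / Real.sinh x) * deriv g x))
      (Set.Ioi 0) := fun x hx => deriv_Gam n (k+1) hg hx
  have hdd : deriv (deriv (Gam n (k+1) g)) r
      = deriv (fun x => deriv (deriv g) x
        + a * ((-(1 / Real.sinh x ^ 2)) * g x + (Real.cosh x / Real.sinh x) * deriv g x)) r :=
    Filter.EventuallyEq.deriv_eq (heq.eventuallyEq_of_mem (isOpen_Ioi.mem_nhds hr))
  have hGam2 : HasDerivAt (fun x => deriv (deriv g) x
        + a * ((-(1 / Real.sinh x ^ 2)) * g x + (Real.cosh x / Real.sinh x) * deriv g x))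
      (deriv (deriv (deriv g)) r
        + a * ((2 * Real.cosh r / Real.sinh r ^ 3) * g r
              + (-(1 / Real.sinh r ^ 2)) * deriv g r
              + (-(1 / Real.sinh r ^ 2)) * deriv g r
              + (Real.cosh r / Real.sinh r) * deriv (deriv g) r)) r := by
    have hu : HasDerivAt (fun x => -(1 / Real.sinh x ^ 2))
        (2 * Real.cosh r / Real.sinh r ^ 3) r := by
      have := (hasDerivAt_invsq 1 hs).neg
      refine this.congr_deriv ?_
      ring
    have h2 := ((hu.mul hdg).add (hc.mul hddg)).const_mul a
    have := hdddg.add h2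
    refine this.congr_deriv ?_
    ring
  -- now compute both sides explicitly
  have hdG := deriv_Gam n (k+1) hg hr
  have hL : Gam n (k+1) (Dop n (k+1) g) r
      = deriv (Dop n (k+1) g) r
        + ((n:ℝ) + ((k+1 : ℕ) : ℝ) - 2) * (Real.cosh r / Real.sinh r) * Dop n (k+1) g r := rfl
  have hR : Dop n k (Gam n (k+1) g) r
      = deriv (deriv (Gam n (k+1) g)) r
        + ((n:ℝ) - 1) * (Real.cosh r / Real.sinh r) * deriv (Gam n (k+1) g) r
        - ((k:ℝ) * ((k:ℝ) + n - 2) / Real.sinh r ^ 2) * Gam n (k+1) g r := rfl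
  show Gam n (k+1) (Dop n (k+1) g) r = Dop n k (Gam n (k+1) g) r
  rw [hL, hR, hDop.deriv, hdd, hGam2.deriv, hdG]
  simp only [Dop, Gam, hM, ha]
  push_cast
  field_simp
  ring

lemma Gam_congr (n k : ℕ) {f h : ℝ → ℝ} (hfh : Set.EqOn f h (Set.Ioi 0)) :
    Set.EqOn (Gam n k f) (Gam n k h) (Set.Ioi 0) := by
  intro r hr
  unfold Gam
  rw [Filter.EventuallyEq.deriv_eq (hfh.eventuallyEq_of_mem (isOpen_Ioi.mem_nhds hr)),
    hfh hr]

lemma QH_congr (n m : ℕ) {f h : ℝ → ℝ} (hfh : Set.EqOn f h (Set.Ioi 0)) :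
    Set.EqOn (QH n m f) (QH n m h) (Set.Ioi 0) := by
  induction m generalizing f h with
  | zero => exact hfh
  | succ m ih => exact ih (Gam_congr n (m+1) hfh)

lemma main (n m : ℕ) {g : ℝ → ℝ} (hg : ContDiffOn ℝ (⊤ : ℕ∞) g (Set.Ioi 0)) :
    Set.EqOn (QH n m (Dop n m g)) (Dop n 0 (QH n m g)) (Set.Ioi 0) := by
  induction m generalizing g with
  | zero => intro r hr; rfl
  | succ m ih =>
    intro r hr
    show QH n m (Gam n (m+1) (Dop n (m+1) g)) r = Dop n 0 (QH n m (Gam n (m+1) g)) r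
    calc QH n m (Gam n (m+1) (Dop n (m+1) g)) r
        = QH n m (Dop n m (Gam n (m+1) g)) r :=
          QH_congr n m (step n m hg) hr
      _ = Dop n 0 (QH n m (Gam n (m+1) g)) r := ih (Gam_smooth n (m+1) hg) hr

end HypAux

/-- Full hyperbolic intertwining: `Q_m ∘ D_{m,r} = D_{0,r} ∘ Q_m` on smooth functions
on `(0,∞)`. -/
theorem hyperbolic_intertwining_full (n m : ℕ) (hn : 2 ≤ n) (hm : 1 ≤ m)
    (g : ℝ → ℝ) (hg : ContDiffOn ℝ (⊤ : ℕ∞) g (Set.Ioi 0)) :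
    ∀ r ∈ Set.Ioi (0 : ℝ),
      QH n m (Dop n m g) r = Dop n 0 (QH n m g) r := by
  intro r hr
  exact HypAux.main n m hg hr
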